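/- Let d ≥ 1, let R be a Borel probability measure on C₁ with endpoint disintegration (R^{xy}), and let μ, ν be Borel probability measures on ℝ^d. Assume there exists π ∈ Π^{C₁}(μ,ν) with H(π‖R) < ∞, and let π̂ be the unique minimizer of H(·‖R) over Π^{C₁}(μ,ν). Then: (i) the endpoint marginal π̂₀₁ is the unique minimizer of H(·‖R₀₁) over Π(μ,ν); (ii) π̂ equals the glued measure π̂₀₁ ⊗ R^·, i.e., the endpoint disintegration of π̂ coincides with that of R for π̂₀₁-a.e. (x,y); and (iii) H(π̂‖R) = H(π̂₀₁‖R₀₁). (The reduction (2.2) of the dynamic Schrödinger problem to the static one, with bridge interpolation.) -/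

import Mathlib

open MeasureTheory ProbabilityTheory Set
open scoped ENNReal NNReal Classical

noncomputable section

abbrev Euc (d : ℕ) := EuclideanSpace ℝ (Fin d)

/-- `C₁ = C([0,1], ℝ^d)` with the supremum metric. -/
abbrev PathSp (d : ℕ) := C(Set.Icc (0:ℝ) 1, Euc d)

instance (d : ℕ) : MeasurableSpace (PathSp d) := borel _
instance (d : ℕ) : BorelSpace (PathSp d) := ⟨rfl⟩

/-- Evaluation of a path at time `0`. -/
def ev0 {d : ℕ} (φ : PathSp d) : Euc d := φ ⟨0, Set.left_mem_Icc.mpr zero_le_one⟩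

/-- Evaluation of a path at time `1`. -/
def ev1 {d : ℕ} (φ : PathSp d) : Euc d := φ ⟨1, Set.right_mem_Icc.mpr zero_le_one⟩

/-- The endpoint map `φ ↦ (φ(0), φ(1))`. -/
def ep {d : ℕ} (φ : PathSp d) : Euc d × Euc d := (ev0 φ, ev1 φ)

/-- Relative entropy `H(p‖q) := ∫ log(dp/dq) dp ∈ [0,∞]` if `p ≪ q`, and `+∞` otherwise
(the integral split into its positive and negative parts). -/
def relEntropy {α : Type*} [MeasurableSpace α] (p q : Measure α) : ℝ≥0∞ :=
  if p ≪ q then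
    (∫⁻ a, ENNReal.ofReal (Real.log ((p.rnDeriv q a).toReal)) ∂p)
      - (∫⁻ a, ENNReal.ofReal (-Real.log ((p.rnDeriv q a).toReal)) ∂p)
  else ⊤

/-- The set `Π^{C₁}(μ,ν)` of path-space couplings: probability measures on `C₁` with
time-`0` marginal `μ` and time-`1` marginal `ν`. -/
def PathCouplings (d : ℕ) (μ ν : Measure (Euc d)) : Set (Measure (PathSp d)) :=
  {π | IsProbabilityMeasure π ∧ π.map ev0 = μ ∧ π.map ev1 = ν}

/-- The set `Π(μ,ν)` of couplings on `ℝ^d × ℝ^d`. -/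
def ProdCouplings (d : ℕ) (μ ν : Measure (Euc d)) : Set (Measure (Euc d × Euc d)) :=
  {m | IsProbabilityMeasure m ∧ m.map Prod.fst = μ ∧ m.map Prod.snd = ν}

/-!
Gluing a static coupling `m ≪ R₀₁` onto the bridges `R^·` gives a path coupling `m ⊗ R^·` with
endpoint marginal `m`, and the data-processing inequality, once for the kernel `R^·` and once for
the endpoint map, gives `H(m ⊗ R^·‖R) ≤ H(m‖R₀₁)` and `H(π₀₁‖R₀₁) ≤ H(π‖R)`. So the dynamic and
static problems have the same value, attained by `π̂` and by `π̂₀₁`, and `π̂₀₁ ⊗ R^·` is a second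
dynamic minimizer. Minimizers are unique on both levels by strict convexity of `klFun`, once
`relEntropy` is identified with Mathlib's `klDiv`.
-/

open InformationTheory


section RelEntropy

variable {α : Type*} [MeasurableSpace α]

lemma mul_ofReal_neg_log_le_one (g : ℝ≥0∞) : g * ENNReal.ofReal (-Real.log g.toReal) ≤ 1 := by
  rcases eq_or_ne g ∞ with rfl | hg
  · simp
  rw [← ENNReal.ofReal_toReal hg, ENNReal.toReal_ofReal ENNReal.toReal_nonneg,
    ← ENNReal.ofReal_mul ENNReal.toReal_nonneg, ← ENNReal.ofReal_one]
  have := Real.self_sub_one_le_mul_log (x := g.toReal) ENNReal.toReal_nonneg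
  exact ENNReal.ofReal_le_ofReal (by nlinarith [ENNReal.toReal_nonneg (a := g)])

lemma ofReal_klFun_add_mul_ofReal_neg_log_add_self {g : ℝ≥0∞} (hg : g ≠ ∞) :
    ENNReal.ofReal (klFun g.toReal) + g * ENNReal.ofReal (-Real.log g.toReal) + g
      = g * ENNReal.ofReal (Real.log g.toReal) + 1 := by
  obtain ⟨t, ht, rfl⟩ : ∃ t, 0 ≤ t ∧ ENNReal.ofReal t = g :=
    ⟨g.toReal, ENNReal.toReal_nonneg, ENNReal.ofReal_toReal hg⟩
  have hk := klFun_nonneg ht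
  rw [ENNReal.toReal_ofReal ht, ← ENNReal.ofReal_mul ht, ← ENNReal.ofReal_mul ht,
    ← ENNReal.ofReal_one]
  rcases le_total (Real.log t) 0 with hlog | hlog
  · rw [ENNReal.ofReal_of_nonpos (mul_nonpos_of_nonneg_of_nonpos ht hlog), zero_add,
      ← ENNReal.ofReal_add hk (by nlinarith), ← ENNReal.ofReal_add (by nlinarith) ht, klFun_apply]
    congr 1; ring
  · rw [ENNReal.ofReal_of_nonpos (show t * -Real.log t ≤ 0 by nlinarith), add_zero,
      ← ENNReal.ofReal_add hk ht,
      ← ENNReal.ofReal_add (by positivity) zero_le_one, klFun_apply]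
    congr 1; ring

theorem relEntropy_eq_klDiv (p q : Measure α) [IsProbabilityMeasure p] [IsProbabilityMeasure q] :
    relEntropy p q = klDiv p q := by
  by_cases hpq : p ≪ q
  swap
  · simp [relEntropy, hpq]
  rw [relEntropy, if_pos hpq, klDiv_eq_lintegral_klFun_of_ac hpq]
  set f := p.rnDeriv q
  have hf : Measurable f := Measure.measurable_rnDeriv p q
  have hlog : Measurable fun a => Real.log (f a).toReal := hf.ennreal_toReal.log
  have hN : ∫⁻ a, ENNReal.ofReal (-Real.log (f a).toReal) ∂p
      = ∫⁻ a, f a * ENNReal.ofReal (-Real.log (f a).toReal) ∂q :=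
    (lintegral_rnDeriv_mul hpq hlog.neg.ennreal_ofReal.aemeasurable).symm
  have hP : ∫⁻ a, ENNReal.ofReal (Real.log (f a).toReal) ∂p
      = ∫⁻ a, f a * ENNReal.ofReal (Real.log (f a).toReal) ∂q :=
    (lintegral_rnDeriv_mul hpq hlog.ennreal_ofReal.aemeasurable).symm
  have hK : Measurable fun a => ENNReal.ofReal (klFun (f a).toReal) :=
    (measurable_klFun.comp hf.ennreal_toReal).ennreal_ofReal
  -- `relEntropy` subtracts in `ℝ≥0∞`, which is only harmless because this negative part is finite
  have hN_le : ∫⁻ a, f a * ENNReal.ofReal (-Real.log (f a).toReal) ∂q ≤ 1 :=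
    (lintegral_mono fun a => mul_ofReal_neg_log_le_one (f a)).trans (by simp)
  -- the `+ 1` on both sides is `∫ f dq = 1 = ∫ 1 dq`
  have hsum : ∫⁻ a, ENNReal.ofReal (klFun (f a).toReal) ∂q
      + ∫⁻ a, f a * ENNReal.ofReal (-Real.log (f a).toReal) ∂q
      = ∫⁻ a, f a * ENNReal.ofReal (Real.log (f a).toReal) ∂q := by
    refine (ENNReal.add_left_inj ENNReal.one_ne_top).1 ?_
    calc _ = ∫⁻ a, ENNReal.ofReal (klFun (f a).toReal)
            + f a * ENNReal.ofReal (-Real.log (f a).toReal) + f a ∂q := by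
          rw [lintegral_add_right _ hf, lintegral_add_left hK,
            Measure.lintegral_rnDeriv hpq, measure_univ]
      _ = ∫⁻ a, f a * ENNReal.ofReal (Real.log (f a).toReal) + 1 ∂q :=
          lintegral_congr_ae <| (Measure.rnDeriv_ne_top p q).mono fun a ha =>
            ofReal_klFun_add_mul_ofReal_neg_log_add_self ha
      _ = _ := by rw [lintegral_add_right _ measurable_const]; simp
  rw [hP, hN, ← hsum, ENNReal.add_sub_cancel_right (ne_top_of_le_ne_top ENNReal.one_ne_top hN_le)]

end RelEntropy

section KLConvexity

variable {α : Type*} [MeasurableSpace α]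

lemma two_mul_ofReal_klFun_midpoint_lt {a b : ℝ} (ha : 0 ≤ a) (hb : 0 ≤ b) (hab : a ≠ b) :
    2 * ENNReal.ofReal (klFun (2⁻¹ * a + 2⁻¹ * b))
      < ENNReal.ofReal (klFun a) + ENNReal.ofReal (klFun b) := by
  have h := strictConvexOn_klFun.2 (Set.mem_Ici.2 ha) (Set.mem_Ici.2 hb) hab
    (by norm_num : (0:ℝ) < 2⁻¹) (by norm_num : (0:ℝ) < 2⁻¹) (by norm_num)
  rw [← ENNReal.ofReal_ofNat 2, ← ENNReal.ofReal_mul zero_le_two,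
    ← ENNReal.ofReal_add (klFun_nonneg ha) (klFun_nonneg hb)]
  have hmid := klFun_nonneg (x := 2⁻¹ * a + 2⁻¹ * b) (by positivity)
  exact (ENNReal.ofReal_lt_ofReal_iff_of_nonneg (by positivity)).2
    (by simp only [smul_eq_mul] at h; linarith)

lemma two_mul_ofReal_klFun_midpoint_le {a b : ℝ} (ha : 0 ≤ a) (hb : 0 ≤ b) :
    2 * ENNReal.ofReal (klFun (2⁻¹ * a + 2⁻¹ * b))
      ≤ ENNReal.ofReal (klFun a) + ENNReal.ofReal (klFun b) := by
  rcases eq_or_ne a b with rfl | hab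
  · rw [show 2⁻¹ * a + 2⁻¹ * a = a by ring, two_mul]
  · exact (two_mul_ofReal_klFun_midpoint_lt ha hb hab).le

lemma toReal_rnDeriv_midpoint_ae (p p' q : Measure α) [IsFiniteMeasure p] [IsFiniteMeasure p']
    [IsFiniteMeasure q] :
    ∀ᵐ x ∂q, (((2⁻¹ : ℝ≥0) • p + (2⁻¹ : ℝ≥0) • p').rnDeriv q x).toReal
      = 2⁻¹ * (p.rnDeriv q x).toReal + 2⁻¹ * (p'.rnDeriv q x).toReal := by
  filter_upwards [Measure.rnDeriv_add ((2⁻¹ : ℝ≥0) • p) ((2⁻¹ : ℝ≥0) • p') q,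
    Measure.rnDeriv_smul_left p q 2⁻¹, Measure.rnDeriv_smul_left p' q 2⁻¹,
    Measure.rnDeriv_ne_top p q, Measure.rnDeriv_ne_top p' q] with x hadd hp hp' hpx hp'x
  rw [hadd, Pi.add_apply, hp, hp', Pi.smul_apply, Pi.smul_apply]
  simp only [ENNReal.smul_def, smul_eq_mul]
  rw [ENNReal.toReal_add (ENNReal.mul_ne_top ENNReal.coe_ne_top hpx)
    (ENNReal.mul_ne_top ENNReal.coe_ne_top hp'x)]
  simp

lemma frequently_rnDeriv_ne_of_ne {p p' q : Measure α} [p.HaveLebesgueDecomposition q]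
    [p'.HaveLebesgueDecomposition q] (hne : p ≠ p') (hpq : p ≪ q) (hp'q : p' ≪ q) :
    ∃ᵐ x ∂q, p.rnDeriv q x ≠ p'.rnDeriv q x := fun h => hne <| by
  rw [← Measure.withDensity_rnDeriv_eq p q hpq, ← Measure.withDensity_rnDeriv_eq p' q hp'q]
  exact withDensity_congr_ae (h.mono fun x hx => not_not.1 hx)

theorem two_mul_klDiv_midpoint_lt_add {p p' q : Measure α} [IsFiniteMeasure p]
    [IsFiniteMeasure p'] [IsFiniteMeasure q] (hne : p ≠ p') (hp : klDiv p q ≠ ∞)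
    (hp' : klDiv p' q ≠ ∞) :
    2 * klDiv ((2⁻¹ : ℝ≥0) • p + (2⁻¹ : ℝ≥0) • p') q < klDiv p q + klDiv p' q := by
  have hpq := (klDiv_ne_top_iff.1 hp).1
  have hp'q := (klDiv_ne_top_iff.1 hp').1
  have hmid : (2⁻¹ : ℝ≥0) • p + (2⁻¹ : ℝ≥0) • p' ≪ q :=
    (hpq.smul_left _).add_left (hp'q.smul_left _)
  have hle : ∀ᵐ x ∂q,
      2 * ENNReal.ofReal (klFun (((2⁻¹ : ℝ≥0) • p + (2⁻¹ : ℝ≥0) • p').rnDeriv q x).toReal)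
        ≤ ENNReal.ofReal (klFun (p.rnDeriv q x).toReal)
          + ENNReal.ofReal (klFun (p'.rnDeriv q x).toReal) := by
    filter_upwards [toReal_rnDeriv_midpoint_ae p p' q] with x hx
    rw [hx]
    exact two_mul_ofReal_klFun_midpoint_le ENNReal.toReal_nonneg ENNReal.toReal_nonneg
  rw [klDiv_eq_lintegral_klFun_of_ac hpq] at hp ⊢
  rw [klDiv_eq_lintegral_klFun_of_ac hp'q] at hp' ⊢
  rw [klDiv_eq_lintegral_klFun_of_ac hmid, ← lintegral_const_mul _ (by fun_prop),
    ← lintegral_add_left (by fun_prop)]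
  refine lintegral_strict_mono_of_ae_le_of_frequently_ae_lt (by fun_prop)
    (ne_top_of_le_ne_top ?_ (lintegral_mono_ae hle)) hle ?_
  · rw [lintegral_add_left (by fun_prop)]
    exact ENNReal.add_ne_top.2 ⟨hp, hp'⟩
  · refine ((frequently_rnDeriv_ne_of_ne hne hpq hp'q).and_eventually
      ((toReal_rnDeriv_midpoint_ae p p' q).and
        ((Measure.rnDeriv_ne_top p q).and (Measure.rnDeriv_ne_top p' q)))).mono
      fun x ⟨hx, hmx, hpx, hp'x⟩ => ?_
    rw [hmx]
    refine (two_mul_ofReal_klFun_midpoint_lt ENNReal.toReal_nonneg ENNReal.toReal_nonneg ?_).ne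
    exact (ENNReal.toReal_eq_toReal_iff' hpx hp'x).not.2 hx

end KLConvexity

section RelEntropyAPI

variable {α β : Type*} [MeasurableSpace α] [MeasurableSpace β]

lemma absolutelyContinuous_of_relEntropy_ne_top {p q : Measure α} (h : relEntropy p q ≠ ∞) :
    p ≪ q := by
  by_contra hpq
  simp [relEntropy, hpq] at h

lemma relEntropy_of_not_absolutelyContinuous {p q : Measure α} (h : ¬ p ≪ q) :
    relEntropy p q = ∞ := by
  simp [relEntropy, h]

lemma relEntropy_map_le {p q : Measure α} [IsProbabilityMeasure p] [IsProbabilityMeasure q]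
    {f : α → β} (hf : Measurable f) : relEntropy (p.map f) (q.map f) ≤ relEntropy p q := by
  have := Measure.isProbabilityMeasure_map (μ := p) hf.aemeasurable
  have := Measure.isProbabilityMeasure_map (μ := q) hf.aemeasurable
  simpa only [relEntropy_eq_klDiv] using klDiv_map_le p q hf

lemma relEntropy_comp_le {p q : Measure α} [IsProbabilityMeasure p] [IsProbabilityMeasure q]
    (κ : Kernel α β) [IsMarkovKernel κ] : relEntropy (κ ∘ₘ p) (κ ∘ₘ q) ≤ relEntropy p q := by
  simpa only [relEntropy_eq_klDiv] using klDiv_comp_right_le p q κ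

lemma isProbabilityMeasure_midpoint (p p' : Measure α) [IsProbabilityMeasure p]
    [IsProbabilityMeasure p'] : IsProbabilityMeasure ((2⁻¹ : ℝ≥0) • p + (2⁻¹ : ℝ≥0) • p') := by
  constructor
  simp [ENNReal.smul_def, ENNReal.inv_two_add_inv_two]

lemma eq_of_relEntropy_le_relEntropy_midpoint {p p' q : Measure α} [IsProbabilityMeasure p]
    [IsProbabilityMeasure p'] [IsProbabilityMeasure q] (heq : relEntropy p q = relEntropy p' q)
    (hfin : relEntropy p q ≠ ∞)
    (hmid : relEntropy p q ≤ relEntropy ((2⁻¹ : ℝ≥0) • p + (2⁻¹ : ℝ≥0) • p') q) : p = p' := by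
  have := isProbabilityMeasure_midpoint p p'
  simp only [relEntropy_eq_klDiv] at heq hmid hfin
  by_contra hne
  have hlt := two_mul_klDiv_midpoint_lt_add hne hfin (heq ▸ hfin)
  rw [← heq, ← two_mul] at hlt
  exact (mul_le_mul_right hmid 2).not_gt hlt

lemma map_midpoint_of_map_eq {p p' : Measure α} {μ : Measure β} {f : α → β} (hf : Measurable f)
    (hp : p.map f = μ) (hp' : p'.map f = μ) :
    ((2⁻¹ : ℝ≥0) • p + (2⁻¹ : ℝ≥0) • p').map f = μ := by
  rw [Measure.map_add _ _ hf, Measure.map_smul, Measure.map_smul, hp, hp', ← add_smul]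
  norm_num

end RelEntropyAPI

section Gluing

variable {Ω E : Type*} [MeasurableSpace Ω] [MeasurableSpace E] [MeasurableSingletonClass E]

lemma map_eq_dirac_of_measure_fiber_eq_one {ρ : Measure Ω} [IsProbabilityMeasure ρ]
    {f : Ω → E} (hf : Measurable f) {z : E} (h : ρ {x | f x = z} = 1) :
    ρ.map f = Measure.dirac z := by
  have hae : f =ᵐ[ρ] fun _ => z :=
    (ae_iff_measure_eq (p := fun x => f x = z)
      (hf (measurableSet_singleton z)).nullMeasurableSet).2
      (by rw [h, measure_univ])
  rw [Measure.map_congr hae, Measure.map_const, measure_univ, one_smul]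

lemma map_comp_of_ae_measure_fiber_eq_one {κ : Kernel E Ω} [IsMarkovKernel κ] {f : Ω → E}
    (hf : Measurable f) {ρ m : Measure E} (hfib : ∀ᵐ z ∂ρ, κ z {x | f x = z} = 1)
    (hm : m ≪ ρ) : (κ ∘ₘ m).map f = m := by
  rw [Measure.map_comp m κ hf]
  conv_rhs => rw [← Measure.id_comp (μ := m)]
  refine Measure.comp_congr (hm.ae_le (hfib.mono fun z hz => ?_))
  rw [Kernel.map_apply κ hf, Kernel.id_apply]
  exact map_eq_dirac_of_measure_fiber_eq_one hf hz

end Gluing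

section Couplings

variable {d : ℕ} {μ ν : Measure (Euc d)}

lemma measurable_ev0 : Measurable (ev0 : PathSp d → Euc d) :=
  (continuous_eval_const _).measurable

lemma measurable_ev1 : Measurable (ev1 : PathSp d → Euc d) :=
  (continuous_eval_const _).measurable

lemma measurable_ep : Measurable (ep : PathSp d → Euc d × Euc d) :=
  measurable_ev0.prodMk measurable_ev1

lemma mem_pathCouplings_iff {π : Measure (PathSp d)} [IsProbabilityMeasure π] :
    π ∈ PathCouplings d μ ν ↔ π.map ep ∈ ProdCouplings d μ ν := by
  have h0 : (π.map ep).map Prod.fst = π.map ev0 := Measure.map_map measurable_fst measurable_ep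
  have h1 : (π.map ep).map Prod.snd = π.map ev1 := Measure.map_map measurable_snd measurable_ep
  simp only [PathCouplings, ProdCouplings, Set.mem_ofPred_eq, h0, h1,
    Measure.isProbabilityMeasure_map measurable_ep.aemeasurable, true_and, ‹IsProbabilityMeasure π›]

lemma midpoint_mem_pathCouplings {π π' : Measure (PathSp d)} (hπ : π ∈ PathCouplings d μ ν)
    (hπ' : π' ∈ PathCouplings d μ ν) :
    (2⁻¹ : ℝ≥0) • π + (2⁻¹ : ℝ≥0) • π' ∈ PathCouplings d μ ν :=
  have := hπ.1
  have := hπ'.1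
  ⟨isProbabilityMeasure_midpoint π π',
    map_midpoint_of_map_eq measurable_ev0 hπ.2.1 hπ'.2.1,
    map_midpoint_of_map_eq measurable_ev1 hπ.2.2 hπ'.2.2⟩

lemma midpoint_mem_prodCouplings {m m' : Measure (Euc d × Euc d)} (hm : m ∈ ProdCouplings d μ ν)
    (hm' : m' ∈ ProdCouplings d μ ν) :
    (2⁻¹ : ℝ≥0) • m + (2⁻¹ : ℝ≥0) • m' ∈ ProdCouplings d μ ν :=
  have := hm.1
  have := hm'.1
  ⟨isProbabilityMeasure_midpoint m m', map_midpoint_of_map_eq measurable_fst hm.2.1 hm'.2.1,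
    map_midpoint_of_map_eq measurable_snd hm.2.2 hm'.2.2⟩

lemma comp_mem_pathCouplings {κ : Kernel (Euc d × Euc d) (PathSp d)} [IsMarkovKernel κ]
    {ρ m : Measure (Euc d × Euc d)} (hfib : ∀ᵐ z ∂ρ, κ z {φ : PathSp d | ep φ = z} = 1)
    (hm : m ∈ ProdCouplings d μ ν) (hmρ : m ≪ ρ) : κ ∘ₘ m ∈ PathCouplings d μ ν := by
  have := hm.1
  rwa [mem_pathCouplings_iff, map_comp_of_ae_measure_fiber_eq_one measurable_ep hfib hmρ]

end Couplings

theorem dynamic_to_static_schrodinger_reduction_general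
    {d : ℕ} (R : Measure (PathSp d)) [IsProbabilityMeasure R]
    (κ : Kernel (Euc d × Euc d) (PathSp d)) [IsMarkovKernel κ]
    (hfib : ∀ᵐ z ∂(R.map ep), (κ z) {φ : PathSp d | ep φ = z} = 1)
    (hdis : R = (R.map ep).bind (fun z => κ z))
    (μ ν : Measure (Euc d))
    (hex : ∃ π ∈ PathCouplings d μ ν, relEntropy π R ≠ ⊤)
    (πhat : Measure (PathSp d)) (hπ : πhat ∈ PathCouplings d μ ν)
    (hmin : ∀ π ∈ PathCouplings d μ ν, relEntropy πhat R ≤ relEntropy π R) :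
    (πhat.map ep ∈ ProdCouplings d μ ν ∧
      (∀ m ∈ ProdCouplings d μ ν,
        relEntropy (πhat.map ep) (R.map ep) ≤ relEntropy m (R.map ep)) ∧
      (∀ m ∈ ProdCouplings d μ ν,
        relEntropy m (R.map ep) = relEntropy (πhat.map ep) (R.map ep) →
          m = πhat.map ep)) ∧
    πhat = (πhat.map ep).bind (fun z => κ z) ∧
    relEntropy πhat R = relEntropy (πhat.map ep) (R.map ep) := by
  have := hπ.1
  have := Measure.isProbabilityMeasure_map (μ := R) measurable_ep.aemeasurable
  have hmarg : πhat.map ep ∈ ProdCouplings d μ ν := mem_pathCouplings_iff.1 hπ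
  have := hmarg.1
  have hglue : ∀ m ∈ ProdCouplings d μ ν, relEntropy (κ ∘ₘ m) R ≤ relEntropy m (R.map ep) := by
    intro m hm
    have := hm.1
    conv_lhs => rw [hdis]
    exact relEntropy_comp_le κ
  have hstatic : ∀ m ∈ ProdCouplings d μ ν, relEntropy πhat R ≤ relEntropy m (R.map ep) := by
    intro m hm
    by_cases hmR : m ≪ R.map ep
    · exact (hmin _ (comp_mem_pathCouplings hfib hm hmR)).trans (hglue m hm)
    · simp [relEntropy_of_not_absolutelyContinuous hmR]
  have hvalue : relEntropy πhat R = relEntropy (πhat.map ep) (R.map ep) :=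
    le_antisymm (hstatic _ hmarg) (relEntropy_map_le measurable_ep)
  have hfin : relEntropy πhat R ≠ ⊤ :=
    let ⟨π, hπ', hπfin⟩ := hex
    ne_top_of_le_ne_top hπfin (hmin π hπ')
  refine ⟨⟨hmarg, fun m hm => hvalue ▸ hstatic m hm, fun m hm heq => ?_⟩, ?_, hvalue⟩
  · have := hm.1
    exact eq_of_relEntropy_le_relEntropy_midpoint heq (heq ▸ hvalue ▸ hfin)
      (heq ▸ hvalue ▸ hstatic _ (midpoint_mem_prodCouplings hm hmarg))
  · show πhat = κ ∘ₘ πhat.map ep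
    have hglued := comp_mem_pathCouplings hfib hmarg
      (absolutelyContinuous_of_relEntropy_ne_top (hvalue ▸ hfin))
    exact eq_of_relEntropy_le_relEntropy_midpoint
      (le_antisymm (hmin _ hglued) (hvalue ▸ hglue _ hmarg)) hfin
      (hmin _ (midpoint_mem_pathCouplings hπ hglued))

/-- reduction of the dynamic Schrödinger problem to the static one: with
`(R^{xy}) = κ` the endpoint disintegration of `R`, if `π̂` is the (unique) minimizer of
`H(·‖R)` over `Π^{C₁}(μ,ν)`, then (i) `π̂₀₁` is the unique minimizer of `H(·‖R₀₁)`
over `Π(μ,ν)`, (ii) `π̂ = π̂₀₁ ⊗ R^·`, and (iii) `H(π̂‖R) = H(π̂₀₁‖R₀₁)`. -/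
theorem dynamic_to_static_schrodinger_reduction
    {d : ℕ} (hd : 1 ≤ d) (R : Measure (PathSp d)) [IsProbabilityMeasure R]
    (κ : Kernel (Euc d × Euc d) (PathSp d)) [IsMarkovKernel κ]
    (hfib : ∀ᵐ z ∂(R.map ep), (κ z) {φ : PathSp d | ep φ = z} = 1)
    (hdis : R = (R.map ep).bind (fun z => κ z))
    (μ ν : Measure (Euc d)) [IsProbabilityMeasure μ] [IsProbabilityMeasure ν]
    (hex : ∃ π ∈ PathCouplings d μ ν, relEntropy π R ≠ ⊤)
    (πhat : Measure (PathSp d)) (hπ : πhat ∈ PathCouplings d μ ν)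
    (hmin : ∀ π ∈ PathCouplings d μ ν, relEntropy πhat R ≤ relEntropy π R) :
    (πhat.map ep ∈ ProdCouplings d μ ν ∧
      (∀ m ∈ ProdCouplings d μ ν,
        relEntropy (πhat.map ep) (R.map ep) ≤ relEntropy m (R.map ep)) ∧
      (∀ m ∈ ProdCouplings d μ ν,
        relEntropy m (R.map ep) = relEntropy (πhat.map ep) (R.map ep) →
          m = πhat.map ep)) ∧
    πhat = (πhat.map ep).bind (fun z => κ z) ∧
    relEntropy πhat R = relEntropy (πhat.map ep) (R.map ep) :=
  dynamic_to_static_schrodinger_reduction_general R κ hfib hdis μ ν hex πhat hπ hmin
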